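/- Let H ∈ (1/2, 1), t > 0 and s, s' ∈ [t, +∞). Define e_{s,t}(x₁, x₂) = ∫_0^t ∫_0^t (u - x₁)₊^{H/2 - 1} (v - x₂)₊^{H/2 - 1} |u - s|^{H-1} |v - s|^{H-1} du dv for (x₁, x₂) ∈ ℝ². Then e_{s,t}, e_{s',t} ∈ L²(ℝ²) and ∫_{ℝ²} e_{s,t}(x₁, x₂) e_{s',t}(x₁, x₂) dx₁ dx₂ = B(1-H, H/2)² · (K_t^2(s, s'))². -/

import Mathlib

open MeasureTheory

/-- `(x)₊^γ`: `x ^ γ` if `x > 0`, and `0` otherwise. -/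
noncomputable def pospow (x γ : ℝ) : ℝ := if 0 < x then x ^ γ else 0

/-- The Euler Beta function. -/
noncomputable def eulerBeta (p q : ℝ) : ℝ := ∫ x in (0:ℝ)..1, x ^ (p - 1) * (1 - x) ^ (q - 1)

/-- The kernel `K_t^2(s,r) = ∫_0^t ∫_0^t |s-u|^{H-1} |u-v|^{H-1} |v-r|^{H-1} du dv`. -/
noncomputable def K2 (H t s r : ℝ) : ℝ :=
  ∫ u in (0:ℝ)..t, ∫ v in (0:ℝ)..t,
    |s - u| ^ (H - 1) * |u - v| ^ (H - 1) * |v - r| ^ (H - 1)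

/-- The kernel `e_{s,t}(x₁,x₂)
  = ∫_0^t ∫_0^t (u-x₁)₊^{H/2-1} (v-x₂)₊^{H/2-1} |u-s|^{H-1} |v-s|^{H-1} du dv`. -/
noncomputable def eKer (H t s : ℝ) (x : ℝ × ℝ) : ℝ :=
  ∫ u in (0:ℝ)..t, ∫ v in (0:ℝ)..t,
    pospow (u - x.1) (H/2 - 1) * pospow (v - x.2) (H/2 - 1)
      * |u - s| ^ (H - 1) * |v - s| ^ (H - 1)

/-!
The kernel factors: `e_{s,t}(x₁, x₂) = f_s(x₁) f_s(x₂)` with `α = H/2 - 1` and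
`f_s(x) = ∫_0^t (u - x)₊^α |u - s|^{H-1} du`. Hence `e_{s,t} ∈ L²(ℝ²)` once `f_s ∈ L²(ℝ)`, and
the inner product is the square of `∫ f_s f_{s'} = B(1-H, H/2) K_t^2(s, s')`.

Writing `f_s f_{s'}` as a double integral over `(u, v) ∈ (0, t]²` and integrating in `x` first,
this reduces to `∫_ℝ (u - x)₊^α (v - x)₊^α dx = B(-(2α+1), α+1) |u - v|^{2α+1}` for `u ≠ v`,
where `2α + 1 = H - 1`. After the shift `x ↦ u - x` and the scaling by `|u - v|`, the left side
is `∫_0^∞ z^α (1 + z)^α dz`, which the substitution `z = w⁻¹ - 1` turns into a Beta integral.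
Fubini applies because `|u - s|^{H-1} |u - v|^{H-1} |v - s'|^{H-1}` is integrable on `(0, t]²`:
it is at most `(|u - s| |v - s'|)^{2(H-1)} + |u - v|^{2(H-1)}`, and `2(H - 1) > -1`.
-/

open Set Real

lemma pospow_nonneg (x γ : ℝ) : 0 ≤ pospow x γ := by
  unfold pospow
  split_ifs with hx
  exacts [rpow_nonneg hx.le γ, le_rfl]

@[fun_prop]
lemma measurable_pospow (γ : ℝ) : Measurable fun x => pospow x γ := by
  have h : (fun x => pospow x γ) = (Ioi 0).indicator (· ^ γ) := by
    funext x
    simp [pospow, indicator_apply]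
  rw [h]
  exact (measurable_id.pow_const γ).indicator measurableSet_Ioi

theorem integral_Ioi_rpow_mul_one_add_rpow (α : ℝ) :
    ∫ z in Ioi (0:ℝ), z ^ α * (1 + z) ^ α = eulerBeta (-(2 * α + 1)) (α + 1) := by
  have himg : (fun w : ℝ => w⁻¹ - 1) '' Ioo 0 1 = Ioi 0 := by
    ext z
    constructor
    · rintro ⟨w, ⟨hw₀, hw₁⟩, rfl⟩
      simpa using (one_lt_inv₀ hw₀).2 hw₁
    · intro (hz : 0 < z)
      refine ⟨(1 + z)⁻¹, ⟨by positivity, inv_lt_one_of_one_lt₀ (by linarith)⟩, ?_⟩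
      simp
  have hderiv : ∀ w ∈ Ioo (0:ℝ) 1,
      HasDerivWithinAt (fun w : ℝ => w⁻¹ - 1) (-(w ^ 2)⁻¹) (Ioo 0 1) w := fun w hw =>
    ((hasDerivAt_inv hw.1.ne').sub_const 1).hasDerivWithinAt
  have hinj : InjOn (fun w : ℝ => w⁻¹ - 1) (Ioo 0 1) := fun w₁ _ w₂ _ h =>
    inv_injective (sub_left_injective h)
  rw [← himg, integral_image_eq_integral_abs_deriv_smul measurableSet_Ioo hderiv hinj, eulerBeta,
    intervalIntegral.integral_of_le zero_le_one, integral_Ioc_eq_integral_Ioo]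
  refine setIntegral_congr_fun measurableSet_Ioo fun w ⟨hw₀, hw₁⟩ => ?_
  have hsum : 1 + (w⁻¹ - 1) = w⁻¹ := by ring
  have hdiff : w⁻¹ - 1 = (1 - w) * w⁻¹ := by field_simp
  have hsq : (w ^ 2)⁻¹ = w ^ (-2 : ℝ) := by rw [rpow_neg hw₀.le]; norm_cast
  rw [hsum, hdiff, smul_eq_mul, abs_neg, abs_of_pos (by positivity), hsq,
    mul_rpow (sub_pos.2 hw₁).le (inv_nonneg.2 hw₀.le), inv_rpow hw₀.le, ← rpow_neg hw₀.le,
    show -(2 * α + 1) - 1 = -2 + -α + -α by ring, rpow_add hw₀, rpow_add hw₀,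
    add_sub_cancel_right]
  ring

theorem integral_Ioi_rpow_mul_add_rpow (α : ℝ) {c : ℝ} (hc : 0 < c) :
    ∫ y in Ioi (0:ℝ), y ^ α * (y + c) ^ α
      = c ^ (2 * α + 1) * eulerBeta (-(2 * α + 1)) (α + 1) := by
  have hscale := integral_comp_mul_left_Ioi (fun y => y ^ α * (y + c) ^ α) 0 hc
  have hfactor : ∀ z ∈ Ioi (0:ℝ),
      (c * z) ^ α * (c * z + c) ^ α = c ^ (2 * α) * (z ^ α * (1 + z) ^ α) :=
    fun z (hz : 0 < z) => by
      rw [show c * z + c = c * (1 + z) by ring, mul_rpow hc.le hz.le, mul_rpow hc.le (by linarith),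
        two_mul, rpow_add hc]
      ring
  rw [setIntegral_congr_fun measurableSet_Ioi hfactor, integral_const_mul,
    integral_Ioi_rpow_mul_one_add_rpow, mul_zero, smul_eq_mul,
    eq_inv_mul_iff_mul_eq₀ hc.ne'] at hscale
  rw [← hscale, rpow_add hc, rpow_one]
  ring

theorem integrableOn_Ioi_rpow_mul_add_rpow {α : ℝ} (hα₁ : -1 < α) (hα₂ : α < -1/2) {c : ℝ}
    (hc : 0 < c) : IntegrableOn (fun y => y ^ α * (y + c) ^ α) (Ioi (0:ℝ)) := by
  have hmeas : AEStronglyMeasurable (fun y : ℝ => y ^ α * (y + c) ^ α) := by fun_prop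
  rw [← Ioc_union_Ioi_eq_Ioi zero_le_one]
  refine IntegrableOn.union ?_ ?_
  · have hbound : IntegrableOn (fun y : ℝ => y ^ α * c ^ α) (Ioc 0 1) :=
      (intervalIntegral.intervalIntegrable_rpow' hα₁).1.mul_const _
    refine hbound.mono' hmeas.restrict ((ae_restrict_mem measurableSet_Ioc).mono fun y hy => ?_)
    rw [norm_of_nonneg (by have := hy.1; positivity)]
    exact mul_le_mul_of_nonneg_left (rpow_le_rpow_of_nonpos hc (by linarith [hy.1]) (by linarith))
      (rpow_nonneg hy.1.le _)
  · have hbound : IntegrableOn (fun y : ℝ => y ^ (α + α)) (Ioi 1) :=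
      integrableOn_Ioi_rpow_of_lt (by linarith) zero_lt_one
    refine hbound.mono' hmeas.restrict ((ae_restrict_mem measurableSet_Ioi).mono fun y hy => ?_)
    have hy₀ : (0:ℝ) < y := zero_lt_one.trans hy
    rw [norm_of_nonneg (by positivity), rpow_add hy₀]
    exact mul_le_mul_of_nonneg_left (rpow_le_rpow_of_nonpos hy₀ (by linarith) (by linarith))
      (rpow_nonneg hy₀.le _)

lemma pospow_sub_mul_pospow_sub (α : ℝ) {u v : ℝ} (huv : u ≤ v) :
    (fun x => pospow (u - x) α * pospow (v - x) α)
      = fun x => (Ioi 0).indicator (fun y => y ^ α * (y + (v - u)) ^ α) (u - x) := by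
  funext x
  by_cases hx : 0 < u - x
  · rw [indicator_of_mem (mem_Ioi.2 hx), pospow, pospow, if_pos hx, if_pos (by linarith),
      sub_add_sub_cancel']
  · rw [indicator_of_notMem (notMem_Ioi.2 (not_lt.1 hx)), pospow, if_neg hx, zero_mul]

theorem integral_pospow_sub_mul_pospow_sub_of_lt (α : ℝ) {u v : ℝ} (huv : u < v) :
    ∫ x, pospow (u - x) α * pospow (v - x) α
      = (v - u) ^ (2 * α + 1) * eulerBeta (-(2 * α + 1)) (α + 1) := by
  rw [pospow_sub_mul_pospow_sub α huv.le, integral_sub_left_eq_self,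
    integral_indicator measurableSet_Ioi, integral_Ioi_rpow_mul_add_rpow α (sub_pos.2 huv)]

theorem integrable_pospow_sub_mul_pospow_sub_of_lt {α : ℝ} (hα₁ : -1 < α) (hα₂ : α < -1/2)
    {u v : ℝ} (huv : u < v) : Integrable fun x => pospow (u - x) α * pospow (v - x) α := by
  rw [pospow_sub_mul_pospow_sub α huv.le]
  refine Integrable.comp_sub_left (f := (Ioi 0).indicator fun y => y ^ α * (y + (v - u)) ^ α) ?_ u
  exact (integrable_indicator_iff measurableSet_Ioi).2
    (integrableOn_Ioi_rpow_mul_add_rpow hα₁ hα₂ (sub_pos.2 huv))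

theorem integral_pospow_sub_mul_pospow_sub (α : ℝ) {u v : ℝ} (huv : u ≠ v) :
    ∫ x, pospow (u - x) α * pospow (v - x) α
      = |u - v| ^ (2 * α + 1) * eulerBeta (-(2 * α + 1)) (α + 1) := by
  rcases huv.lt_or_gt with h | h
  · rw [abs_sub_comm, abs_of_pos (sub_pos.2 h), integral_pospow_sub_mul_pospow_sub_of_lt α h]
  · simp_rw [mul_comm (pospow (u - _) α)]
    rw [abs_of_pos (sub_pos.2 h), integral_pospow_sub_mul_pospow_sub_of_lt α h]

theorem integrable_pospow_sub_mul_pospow_sub {α : ℝ} (hα₁ : -1 < α) (hα₂ : α < -1/2)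
    {u v : ℝ} (huv : u ≠ v) : Integrable fun x => pospow (u - x) α * pospow (v - x) α := by
  rcases huv.lt_or_gt with h | h
  · exact integrable_pospow_sub_mul_pospow_sub_of_lt hα₁ hα₂ h
  · simp_rw [mul_comm (pospow (u - _) α)]
    exact integrable_pospow_sub_mul_pospow_sub_of_lt hα₁ hα₂ h

lemma locallyIntegrable_abs_rpow {q : ℝ} (hq : -1 < q) :
    LocallyIntegrable fun x : ℝ => |x| ^ q := by
  refine locallyIntegrable_of_norm_le_rpow (C := 1) (α := -q) (by simp) (by simp; linarith)
    (ae_of_all _ fun x => ?_) (continuous_abs.measurable.pow_const q).aestronglyMeasurable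
  simp [abs_of_nonneg (rpow_nonneg (abs_nonneg x) q)]

lemma integrableOn_abs_sub_rpow {q : ℝ} (hq : -1 < q) (c a b : ℝ) :
    IntegrableOn (fun x => |x - c| ^ q) (Ioc a b) := by
  have h := ((locallyIntegrable_abs_rpow hq).integrableOn_isCompact
    (isCompact_uIcc (a := a - c) (b := b - c))).intervalIntegrable.comp_sub_right c
  simpa using h.1

lemma integrable_abs_sub_rpow_prod {q : ℝ} (hq : -1 < q) (a b : ℝ) :
    Integrable (fun p : ℝ × ℝ => |p.1 - p.2| ^ q)
      ((volume.restrict (Ioc a b)).prod (volume.restrict (Ioc a b))) := by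
  have hkernel : Integrable ((Icc (a - b) (b - a)).indicator fun z : ℝ => |z| ^ q) :=
    (integrable_indicator_iff measurableSet_Icc).2
      ((locallyIntegrable_abs_rpow hq).integrableOn_isCompact isCompact_Icc)
  have hconv := Integrable.convolution_integrand (ContinuousLinearMap.mul ℝ ℝ)
    (ν := volume.restrict (Ioc a b)) (integrable_const (1:ℝ)) hkernel
  refine (hconv.mono_measure (Measure.prod_mono Measure.restrict_le_self le_rfl)).congr ?_
  rw [Measure.prod_restrict]
  filter_upwards [ae_restrict_mem (measurableSet_Ioc.prod measurableSet_Ioc)] with p ⟨hu, hv⟩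
  rw [ContinuousLinearMap.mul_apply', one_mul, indicator_of_mem]
  constructor <;> linarith [hu.1, hu.2, hv.1, hv.2]

lemma integrable_abs_sub_rpow_mul_abs_sub_rpow_mul_abs_sub_rpow {q : ℝ} (hq : -1/2 < q)
    (a b s s' : ℝ) :
    Integrable (fun p : ℝ × ℝ => |p.1 - s| ^ q * |p.1 - p.2| ^ q * |p.2 - s'| ^ q)
      ((volume.restrict (Ioc a b)).prod (volume.restrict (Ioc a b))) := by
  have hq₂ : -1 < 2 * q := by linarith
  have hbound := ((integrableOn_abs_sub_rpow hq₂ s a b).mul_prod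
    (integrableOn_abs_sub_rpow hq₂ s' a b)).add (integrable_abs_sub_rpow_prod hq₂ a b)
  refine hbound.mono' (by fun_prop) (ae_of_all _ fun p => ?_)
  have hsq : ∀ x : ℝ, |x| ^ (2 * q) = (|x| ^ q) ^ 2 := fun x => by
    rw [mul_comm, rpow_mul (abs_nonneg x)]
    norm_cast
  simp only [Pi.add_apply, hsq, norm_mul, norm_of_nonneg (rpow_nonneg (abs_nonneg _) _)]
  have hA := rpow_nonneg (abs_nonneg (p.1 - s)) q
  have hB := rpow_nonneg (abs_nonneg (p.1 - p.2)) q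
  have hC := rpow_nonneg (abs_nonneg (p.2 - s')) q
  nlinarith [sq_nonneg (|p.1 - s| ^ q * |p.2 - s'| ^ q - |p.1 - p.2| ^ q),
    mul_nonneg (mul_nonneg hA hB) hC]

section RiemannLiouville

variable {α : ℝ} {μ : Measure ℝ} {g h : ℝ → ℝ}

/-- Up to the factor `1 / Γ(α + 1)`, the right-sided Riemann–Liouville integral of order `α + 1`
of the measure `g μ`. -/
noncomputable def rlIntegral (α : ℝ) (μ : Measure ℝ) (g : ℝ → ℝ) (x : ℝ) : ℝ :=
  ∫ u, pospow (u - x) α * g u ∂μ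

lemma stronglyMeasurable_rlIntegral [SFinite μ] (hg : Measurable g) :
    StronglyMeasurable (rlIntegral α μ g) :=
  (((measurable_pospow α).comp (measurable_snd.sub measurable_fst)).mul
    (hg.comp measurable_snd)).stronglyMeasurable.integral_prod_right'

lemma rlIntegral_mul_rlIntegral [SFinite μ] (x : ℝ) :
    rlIntegral α μ g x * rlIntegral α μ h x
      = ∫ p : ℝ × ℝ, pospow (p.1 - x) α * g p.1 * (pospow (p.2 - x) α * h p.2) ∂μ.prod μ :=
  (integral_prod_mul _ _).symm

theorem integrable_and_integral_rlIntegral_mul_rlIntegral [SFinite μ] [NullSingletonClass μ]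
    (hα₁ : -1 < α) (hα₂ : α < -1/2) (hg : Measurable g) (hh : Measurable h)
    (hg₀ : 0 ≤ g) (hh₀ : 0 ≤ h)
    (hint : Integrable (fun p : ℝ × ℝ => g p.1 * |p.1 - p.2| ^ (2 * α + 1) * h p.2) (μ.prod μ)) :
    Integrable (fun x => rlIntegral α μ g x * rlIntegral α μ h x) ∧
      ∫ x, rlIntegral α μ g x * rlIntegral α μ h x
        = eulerBeta (-(2 * α + 1)) (α + 1)
          * ∫ p, g p.1 * |p.1 - p.2| ^ (2 * α + 1) * h p.2 ∂μ.prod μ := by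
  set B := eulerBeta (-(2 * α + 1)) (α + 1)
  let W : ℝ × (ℝ × ℝ) → ℝ := fun z =>
    pospow (z.2.1 - z.1) α * g z.2.1 * (pospow (z.2.2 - z.1) α * h z.2.2)
  have hWslice : ∀ p : ℝ × ℝ,
      (fun x => W (x, p)) = fun x => g p.1 * h p.2 * (pospow (p.1 - x) α * pospow (p.2 - x) α) :=
    fun p => funext fun x => by ring
  have hW₀ : 0 ≤ W := fun z =>
    mul_nonneg (mul_nonneg (pospow_nonneg _ _) (hg₀ _)) (mul_nonneg (pospow_nonneg _ _) (hh₀ _))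
  have hoff : ∀ᵐ p ∂μ.prod μ, p.1 ≠ p.2 :=
    (Measure.ae_prod_iff_ae_ae (measurableSet_eq_fun measurable_fst measurable_snd).compl).2
      (ae_of_all _ fun u => (μ.ae_ne u).mono fun _ hne => hne.symm)
  have hinner : ∀ᵐ p ∂μ.prod μ,
      ∫ x, W (x, p) = B * (g p.1 * |p.1 - p.2| ^ (2 * α + 1) * h p.2) :=
    hoff.mono fun p hp => by
      rw [hWslice, integral_const_mul, integral_pospow_sub_mul_pospow_sub α hp]
      ring
  have hW : Integrable W (volume.prod (μ.prod μ)) := by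
    have hWm : Measurable W := by unfold W; fun_prop
    rw [integrable_prod_iff' hWm.aestronglyMeasurable]
    refine ⟨hoff.mono fun p hp => ?_, (hint.const_mul B).congr (hinner.mono fun p hp => ?_)⟩
    · rw [hWslice]
      exact (integrable_pospow_sub_mul_pospow_sub hα₁ hα₂ hp).const_mul _
    · simp only [norm_of_nonneg (hW₀ _), hp]
  refine ⟨hW.integral_prod_left.congr
    (ae_of_all _ fun x => (rlIntegral_mul_rlIntegral x).symm), ?_⟩
  calc ∫ x, rlIntegral α μ g x * rlIntegral α μ h x
      = ∫ x, ∫ p, W (x, p) ∂μ.prod μ := integral_congr_ae (ae_of_all _ rlIntegral_mul_rlIntegral)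
    _ = ∫ p, (∫ x, W (x, p)) ∂μ.prod μ := integral_integral_swap (f := fun x p => W (x, p)) hW
    _ = ∫ p, B * (g p.1 * |p.1 - p.2| ^ (2 * α + 1) * h p.2) ∂μ.prod μ :=
      integral_congr_ae hinner
    _ = _ := integral_const_mul _ _

end RiemannLiouville

lemma memLp_two_mul_prod {X Y : Type*} [MeasurableSpace X] [MeasurableSpace Y] {μ : Measure X}
    {ν : Measure Y} {f : X → ℝ} {g : Y → ℝ} (hf : MemLp f 2 μ) (hg : MemLp g 2 ν) :
    MemLp (fun z : X × Y => f z.1 * g z.2) 2 (μ.prod ν) := by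
  refine (memLp_two_iff_integrable_sq (hf.1.comp_fst.mul hg.1.comp_snd)).2 ?_
  simpa only [Pi.mul_apply, mul_pow] using hf.integrable_sq.mul_prod hg.integrable_sq

noncomputable def eKerFactor (H t s : ℝ) : ℝ → ℝ :=
  rlIntegral (H / 2 - 1) (volume.restrict (Ioc 0 t)) fun u => |u - s| ^ (H - 1)

lemma eKer_eq_eKerFactor_mul (H : ℝ) {t : ℝ} (ht : 0 ≤ t) (s : ℝ) (x : ℝ × ℝ) :
    eKer H t s x = eKerFactor H t s x.1 * eKerFactor H t s x.2 := by
  rw [eKer, eKerFactor, rlIntegral, rlIntegral, intervalIntegral.integral_of_le ht,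
    ← integral_mul_const]
  congr with u
  rw [intervalIntegral.integral_of_le ht, ← integral_const_mul]
  congr with v
  ring

lemma K2_eq_integral_prod {H : ℝ} (hH : 1/2 < H) {t : ℝ} (ht : 0 ≤ t) (s s' : ℝ) :
    K2 H t s s' = ∫ p, |p.1 - s| ^ (H - 1) * |p.1 - p.2| ^ (H - 1) * |p.2 - s'| ^ (H - 1)
      ∂(volume.restrict (Ioc 0 t)).prod (volume.restrict (Ioc 0 t)) := by
  rw [integral_prod _
      (integrable_abs_sub_rpow_mul_abs_sub_rpow_mul_abs_sub_rpow (by linarith) 0 t s s'),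
    K2, intervalIntegral.integral_of_le ht]
  simp_rw [intervalIntegral.integral_of_le ht, abs_sub_comm s]

theorem integrable_and_integral_eKerFactor_mul {H : ℝ} (hH : H ∈ Ioo (1/2 : ℝ) 1) {t : ℝ}
    (ht : 0 ≤ t) (s s' : ℝ) :
    Integrable (fun x => eKerFactor H t s x * eKerFactor H t s' x) ∧
      ∫ x, eKerFactor H t s x * eKerFactor H t s' x
        = eulerBeta (1 - H) (H / 2) * K2 H t s s' := by
  have hα : 2 * (H / 2 - 1) + 1 = H - 1 := by ring
  have key := integrable_and_integral_rlIntegral_mul_rlIntegral (μ := volume.restrict (Ioc 0 t))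
    (g := fun u => |u - s| ^ (H - 1)) (h := fun u => |u - s'| ^ (H - 1))
    (by linarith [hH.1] : -1 < H / 2 - 1) (by linarith [hH.2]) (by fun_prop) (by fun_prop)
    (fun u => rpow_nonneg (abs_nonneg _) _) (fun u => rpow_nonneg (abs_nonneg _) _)
    (by simpa only [hα] using
      integrable_abs_sub_rpow_mul_abs_sub_rpow_mul_abs_sub_rpow (by linarith [hH.1]) 0 t s s')
  simp only [hα, show -(H - 1) = 1 - H by ring, show H / 2 - 1 + 1 = H / 2 by ring] at key
  rwa [K2_eq_integral_prod hH.1 ht s s']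

lemma memLp_eKer {H : ℝ} (hH : H ∈ Ioo (1/2 : ℝ) 1) {t : ℝ} (ht : 0 ≤ t) (s : ℝ) :
    MemLp (eKer H t s) 2 := by
  have hf : MemLp (eKerFactor H t s) 2 := by
    refine (memLp_two_iff_integrable_sq ?_).2 ?_
    · exact (stronglyMeasurable_rlIntegral (by fun_prop)).aestronglyMeasurable
    · simpa only [sq] using (integrable_and_integral_eKerFactor_mul hH ht s s).1
  rw [funext (eKer_eq_eKerFactor_mul H ht s), Measure.volume_eq_prod]
  exact memLp_two_mul_prod hf hf

theorem eKer_inner_product_general (H : ℝ) (hH : H ∈ Set.Ioo (1/2 : ℝ) 1) (t : ℝ) (ht : 0 < t)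
    (s s' : ℝ) :
    MemLp (eKer H t s) 2 (volume : Measure (ℝ × ℝ)) ∧
    MemLp (eKer H t s') 2 (volume : Measure (ℝ × ℝ)) ∧
    ∫ x : ℝ × ℝ, eKer H t s x * eKer H t s' x
      = (eulerBeta (1 - H) (H/2)) ^ 2 * (K2 H t s s') ^ 2 := by
  refine ⟨memLp_eKer hH ht.le s, memLp_eKer hH ht.le s', ?_⟩
  set F := fun y => eKerFactor H t s y * eKerFactor H t s' y with hF
  have hsplit : (fun x => eKer H t s x * eKer H t s' x) = fun x : ℝ × ℝ => F x.1 * F x.2 := by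
    funext x
    rw [eKer_eq_eKerFactor_mul H ht.le, eKer_eq_eKerFactor_mul H ht.le]
    ring
  rw [hsplit, Measure.volume_eq_prod, integral_prod_mul, hF,
    (integrable_and_integral_eKerFactor_mul hH ht.le s s').2]
  ring

theorem eKer_inner_product (H : ℝ) (hH : H ∈ Set.Ioo (1/2 : ℝ) 1) (t : ℝ) (ht : 0 < t)
    (s s' : ℝ) (hs : s ∈ Set.Ici t) (hs' : s' ∈ Set.Ici t) :
    MemLp (eKer H t s) 2 (volume : Measure (ℝ × ℝ)) ∧
    MemLp (eKer H t s') 2 (volume : Measure (ℝ × ℝ)) ∧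
    ∫ x : ℝ × ℝ, eKer H t s x * eKer H t s' x
      = (eulerBeta (1 - H) (H/2)) ^ 2 * (K2 H t s s') ^ 2 :=
  eKer_inner_product_general H hH t ht s s'
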